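/- Let L > 0 and let u be a classical solution of the projected sinh-Gordon equation (C², L-periodic in x, with zero spatial mean). If the initial energy satisfies E(0) = (1/2)∫₀^L [u_x(x,0)² + u_t(x,0)² − 2(cosh(u(x,0)) − 1)] dx < 0, then sup_{t ≥ 0} ∫₀^L u(x,t)² dx = +∞. -/

import Mathlib

/-!
Virial argument. The energy is conserved: after substituting the equation its time derivative
is the integral of an `x`-derivative of a periodic function, plus the nonlocal term times
`∫ uₜ`, which vanishes because the mean of `u` stays zero. For `I(t) = ∫ u²` the equation, one
integration by parts and `2 (cosh u - 1) ≤ u sinh u` give `I'' ≥ 4 ∫ uₜ² - 4 E ≥ -4 E(0) > 0`,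
so `I` grows at least quadratically.
-/

open Real MeasureTheory Function Set Filter Topology

theorem le_of_hasDerivAt_le {f g f' g' : ℝ → ℝ} {a t : ℝ}
    (hf : ∀ s, HasDerivAt f (f' s) s) (hg : ∀ s, HasDerivAt g (g' s) s)
    (ha : f a ≤ g a) (hle : ∀ s, a ≤ s → f' s ≤ g' s) (ht : a ≤ t) : f t ≤ g t :=
  image_le_of_deriv_right_le_deriv_boundary (fun s _ => (hf s).continuousAt.continuousWithinAt)
    (fun s _ => (hf s).hasDerivWithinAt) ha (fun s _ => (hg s).continuousAt.continuousWithinAt)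
    (fun s _ => (hg s).hasDerivWithinAt) (fun s hs => hle s hs.1) ⟨ht, le_rfl⟩

theorem tendsto_atTop_of_le_deriv_deriv {f f' f'' : ℝ → ℝ} {c : ℝ} (hc : 0 < c)
    (hf : ∀ t, HasDerivAt f (f' t) t) (hf' : ∀ t, HasDerivAt f' (f'' t) t)
    (hle : ∀ t, 0 ≤ t → c ≤ f'' t) : Tendsto f atTop atTop := by
  have hlin : ∀ t, 0 ≤ t → f' 0 + c * t ≤ f' t := fun t ht =>
    le_of_hasDerivAt_le (fun s => ((hasDerivAt_id s).const_mul c).const_add (f' 0)) hf'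
      (by simp) (fun s hs => by simpa using hle s hs) ht
  have hquad : ∀ t, 0 ≤ t → f 0 + t * (f' 0 + c / 2 * t) ≤ f t := fun t ht =>
    le_of_hasDerivAt_le (f' := fun s => f' 0 + c * s) (fun s =>
        (((hasDerivAt_id s).mul (((hasDerivAt_id s).const_mul (c / 2)).const_add
          (f' 0))).const_add (f 0)).congr_deriv (by simp only [id]; ring))
      hf (by simp) hlin ht
  refine tendsto_atTop_mono' _ (eventually_ge_atTop 0 |>.mono hquad) ?_
  exact tendsto_atTop_add_const_left _ _ <| tendsto_id.atTop_mul_atTop₀ <|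
    tendsto_atTop_add_const_left _ _ (tendsto_id.const_mul_atTop (by positivity))

theorem sinh_le_mul_cosh {x : ℝ} (hx : 0 ≤ x) : sinh x ≤ x * cosh x :=
  le_of_hasDerivAt_le hasDerivAt_sinh (fun s => (hasDerivAt_id s).mul (hasDerivAt_cosh s))
    (by simp) (fun s hs => by
      have := mul_nonneg hs (sinh_nonneg_iff.2 hs)
      simp only [id, one_mul]; linarith) hx

theorem two_mul_cosh_sub_one_le_mul_sinh (x : ℝ) : 2 * (cosh x - 1) ≤ x * sinh x := by
  have key : ∀ x, 0 ≤ x → 2 * (cosh x - 1) ≤ x * sinh x := fun x hx =>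
    le_of_hasDerivAt_le (fun s => ((hasDerivAt_cosh s).sub_const 1).const_mul 2)
      (fun s => (hasDerivAt_id s).mul (hasDerivAt_sinh s)) (by simp)
      (fun s hs => by have := sinh_le_mul_cosh hs; simp only [id, one_mul]; linarith) hx
  rcases le_total 0 x with hx | hx
  · exact key x hx
  · simpa using key (-x) (neg_nonneg.2 hx)

theorem integral_eq_zero_of_hasDerivAt_of_periodic {g g' : ℝ → ℝ} {L : ℝ}
    (hg : ∀ x, HasDerivAt g (g' x) x) (hg' : Continuous g') (hper : Periodic g L) :
    ∫ x in 0..L, g' x = 0 := by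
  rw [intervalIntegral.integral_eq_sub_of_hasDerivAt (fun x _ => hg x) (hg'.intervalIntegrable 0 L),
    sub_eq_zero]
  simpa using hper 0

theorem hasDerivAt_intervalIntegral_of_continuous {F F' : ℝ → ℝ → ℝ}
    (hF : Continuous (uncurry F)) (hF' : Continuous (uncurry F'))
    (hd : ∀ x s, HasDerivAt (F x) (F' x s) s) (a b t : ℝ) :
    HasDerivAt (fun s => ∫ x in a..b, F x s) (∫ x in a..b, F' x t) t := by
  obtain ⟨C, hC⟩ : ∃ C, ∀ p ∈ uIcc a b ×ˢ Icc (t - 1) (t + 1), ‖uncurry F' p‖ ≤ C :=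
    (isCompact_uIcc.prod isCompact_Icc).exists_bound_of_continuousOn hF'.continuousOn
  refine (intervalIntegral.hasDerivAt_integral_of_dominated_loc_of_deriv_le
    (F := fun s x => F x s) (bound := fun _ => C) (Metric.ball_mem_nhds t one_pos)
    (.of_forall fun s => (hF.uncurry_right s).aestronglyMeasurable)
    ((hF.uncurry_right t).intervalIntegrable a b) (hF'.uncurry_right t).aestronglyMeasurable
    (.of_forall fun x hx s hs => hC (x, s) ⟨uIoc_subset_uIcc hx, ?_⟩) intervalIntegrable_const
    (.of_forall fun x _ s _ => hd x s)).2
  rw [Metric.mem_ball, Real.dist_eq, abs_lt] at hs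
  constructor <;> linarith [hs.1, hs.2]

noncomputable def partialDeriv (v : ℝ × ℝ) (u : ℝ → ℝ → ℝ) (x t : ℝ) : ℝ :=
  fderiv ℝ (uncurry u) (x, t) v

local notation "∂ₓ" => partialDeriv (1, 0)
local notation "∂ₜ" => partialDeriv (0, 1)

section partialDeriv

variable {u : ℝ → ℝ → ℝ}

theorem contDiff_partialDeriv {m n : WithTop ℕ∞} (h : ContDiff ℝ n (uncurry u)) (hmn : m + 1 ≤ n)
    (v : ℝ × ℝ) : ContDiff ℝ m (uncurry (partialDeriv v u)) :=
  (ContinuousLinearMap.apply ℝ ℝ v).contDiff.comp (h.fderiv_right hmn)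

theorem continuous_partialDeriv (h : ContDiff ℝ 1 (uncurry u)) (v : ℝ × ℝ) :
    Continuous (uncurry (partialDeriv v u)) :=
  (contDiff_partialDeriv h (m := 0) (by norm_num) v).continuous

theorem hasDerivAt_partialDeriv_fst (h : Differentiable ℝ (uncurry u)) (x t : ℝ) :
    HasDerivAt (fun y => u y t) (∂ₓ u x t) x :=
  (h (x, t)).hasFDerivAt.comp_hasDerivAt (l := uncurry u) x
    ((hasDerivAt_id x).prodMk (hasDerivAt_const x t))

theorem hasDerivAt_partialDeriv_snd (h : Differentiable ℝ (uncurry u)) (x t : ℝ) :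
    HasDerivAt (u x) (∂ₜ u x t) t :=
  (h (x, t)).hasFDerivAt.comp_hasDerivAt (l := uncurry u) t
    ((hasDerivAt_const t x).prodMk (hasDerivAt_id t))

theorem deriv_eq_partialDeriv_fst (h : Differentiable ℝ (uncurry u)) (t : ℝ) :
    deriv (fun y => u y t) = fun x => ∂ₓ u x t :=
  funext fun x => (hasDerivAt_partialDeriv_fst h x t).deriv

theorem deriv_eq_partialDeriv_snd (h : Differentiable ℝ (uncurry u)) (x : ℝ) :
    deriv (u x) = ∂ₜ u x :=
  funext fun t => (hasDerivAt_partialDeriv_snd h x t).deriv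

theorem partialDeriv_comm (h : ContDiff ℝ 2 (uncurry u)) (v w : ℝ × ℝ) :
    partialDeriv v (partialDeriv w u) = partialDeriv w (partialDeriv v u) := by
  ext x t
  have hdiff : DifferentiableAt ℝ (fderiv ℝ (uncurry u)) (x, t) :=
    (h.fderiv_right (m := 1) le_rfl).differentiable one_ne_zero (x, t)
  have hsecond : ∀ w, fderiv ℝ (uncurry (partialDeriv w u)) (x, t) =
      (ContinuousLinearMap.apply ℝ ℝ w).comp (fderiv ℝ (fderiv ℝ (uncurry u)) (x, t)) :=
    fun w => ((ContinuousLinearMap.apply ℝ ℝ w).hasFDerivAt.comp (x, t) hdiff.hasFDerivAt).fderiv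
  simp only [partialDeriv, hsecond, ContinuousLinearMap.comp_apply,
    ContinuousLinearMap.apply_apply]
  exact h.contDiffAt.isSymmSndFDerivAt (by simp [minSmoothness_of_isRCLikeNormedField]) v w

theorem partialDeriv_periodic {L : ℝ} (hper : ∀ t, Periodic (u · t) L) (v : ℝ × ℝ) (t : ℝ) :
    Periodic (partialDeriv v u · t) L := by
  intro x
  have hshift : (fun p : ℝ × ℝ => uncurry u (p + (L, 0))) = uncurry u :=
    funext fun ⟨y, s⟩ => by simpa using hper s y
  have h := fderiv_comp_add_right (𝕜 := ℝ) (f := uncurry u) (x := (x, t)) (L, 0)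
  rw [hshift] at h
  simp only [partialDeriv, h, Prod.mk_add_mk, add_zero]

end partialDeriv

theorem integral_partialDeriv_fst_mul_add_eq_zero {f g : ℝ → ℝ → ℝ} {L : ℝ}
    (hf : ContDiff ℝ 1 (uncurry f)) (hg : ContDiff ℝ 1 (uncurry g))
    (hfp : ∀ t, Periodic (f · t) L) (hgp : ∀ t, Periodic (g · t) L) (t : ℝ) :
    ∫ x in 0..L, (∂ₓ f x t * g x t + f x t * ∂ₓ g x t) = 0 := by
  have hf' := continuous_partialDeriv hf (1, 0)
  have hg' := continuous_partialDeriv hg (1, 0)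
  have hfc := hf.continuous
  have hgc := hg.continuous
  exact integral_eq_zero_of_hasDerivAt_of_periodic
    (fun x => (hasDerivAt_partialDeriv_fst (hf.differentiable one_ne_zero) x t).mul
      (hasDerivAt_partialDeriv_fst (hg.differentiable one_ne_zero) x t))
    (by fun_prop) ((hfp t).mul (hgp t))

structure IsProjectedSinhGordonSolution (L : ℝ) (u : ℝ → ℝ → ℝ) : Prop where
  contDiff : ContDiff ℝ 2 (uncurry u)
  periodic : ∀ t, Periodic (u · t) L
  integral_eq_zero : ∀ t, 0 ≤ t → ∫ x in 0..L, u x t = 0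
  pde : ∀ x t, 0 ≤ t →
    ∂ₜ (∂ₜ u) x t - ∂ₓ (∂ₓ u) x t - sinh (u x t) + (1 / L) * ∫ y in 0..L, sinh (u y t) = 0

noncomputable def energy (L : ℝ) (u : ℝ → ℝ → ℝ) (t : ℝ) : ℝ :=
  1 / 2 * ∫ x in 0..L, (∂ₓ u x t ^ 2 + ∂ₜ u x t ^ 2 - 2 * (cosh (u x t) - 1))

section timeDerivatives

variable {L : ℝ} {u : ℝ → ℝ → ℝ}

theorem hasDerivAt_integral_sq (h : ContDiff ℝ 1 (uncurry u)) (t : ℝ) :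
    HasDerivAt (fun s => ∫ x in 0..L, u x s ^ 2) (∫ x in 0..L, 2 * (u x t * ∂ₜ u x t)) t := by
  have hc := h.continuous
  have hct := continuous_partialDeriv h (0, 1)
  refine hasDerivAt_intervalIntegral_of_continuous (F := fun x s => u x s ^ 2)
    (F' := fun x s => 2 * (u x s * ∂ₜ u x s)) (by fun_prop) (by fun_prop) (fun x s => ?_) 0 L t
  exact ((hasDerivAt_partialDeriv_snd (h.differentiable one_ne_zero) x s).pow 2).congr_deriv
    (by ring)

theorem hasDerivAt_integral_mul_partialDeriv_snd (h : ContDiff ℝ 2 (uncurry u)) (t : ℝ) :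
    HasDerivAt (fun s => ∫ x in 0..L, 2 * (u x s * ∂ₜ u x s))
      (∫ x in 0..L, 2 * (∂ₜ u x t ^ 2 + u x t * ∂ₜ (∂ₜ u) x t)) t := by
  have ht := contDiff_partialDeriv h (m := 1) (by norm_num) (0, 1)
  have hc := h.continuous
  have hct := ht.continuous
  have hctt := continuous_partialDeriv ht (0, 1)
  refine hasDerivAt_intervalIntegral_of_continuous (F := fun x s => 2 * (u x s * ∂ₜ u x s))
    (F' := fun x s => 2 * (∂ₜ u x s ^ 2 + u x s * ∂ₜ (∂ₜ u) x s)) (by fun_prop) (by fun_prop)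
    (fun x s => ?_) 0 L t
  exact (((hasDerivAt_partialDeriv_snd (h.differentiable two_ne_zero) x s).mul
    (hasDerivAt_partialDeriv_snd (ht.differentiable one_ne_zero) x s)).const_mul 2).congr_deriv
    (by ring)

theorem hasDerivAt_energy (h : ContDiff ℝ 2 (uncurry u)) (t : ℝ) :
    HasDerivAt (energy L u) (∫ x in 0..L,
      (∂ₓ u x t * ∂ₜ (∂ₓ u) x t + ∂ₜ u x t * ∂ₜ (∂ₜ u) x t - sinh (u x t) * ∂ₜ u x t)) t := by
  have hx := contDiff_partialDeriv h (m := 1) (by norm_num) (1, 0)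
  have ht := contDiff_partialDeriv h (m := 1) (by norm_num) (0, 1)
  have hc := h.continuous
  have hcx := hx.continuous
  have hct := ht.continuous
  have hctx := continuous_partialDeriv hx (0, 1)
  have hctt := continuous_partialDeriv ht (0, 1)
  have hpointwise : ∀ x s,
      HasDerivAt (fun s => ∂ₓ u x s ^ 2 + ∂ₜ u x s ^ 2 - 2 * (cosh (u x s) - 1))
        (2 * (∂ₓ u x s * ∂ₜ (∂ₓ u) x s + ∂ₜ u x s * ∂ₜ (∂ₜ u) x s - sinh (u x s) * ∂ₜ u x s)) s :=
    fun x s => ((((hasDerivAt_partialDeriv_snd (hx.differentiable one_ne_zero) x s).pow 2).add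
      ((hasDerivAt_partialDeriv_snd (ht.differentiable one_ne_zero) x s).pow 2)).sub
      (((hasDerivAt_partialDeriv_snd (h.differentiable two_ne_zero) x s).cosh.sub_const
        1).const_mul 2)).congr_deriv (by ring)
  refine ((hasDerivAt_intervalIntegral_of_continuous (by fun_prop) (by fun_prop) hpointwise 0 L
    t).const_mul (1 / 2)).congr_deriv ?_
  rw [intervalIntegral.integral_const_mul, ← mul_assoc]
  norm_num

end timeDerivatives

namespace IsProjectedSinhGordonSolution

variable {L : ℝ} {u : ℝ → ℝ → ℝ}

theorem integral_partialDeriv_snd_eq_zero (hu : IsProjectedSinhGordonSolution L u) {t : ℝ}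
    (ht : 0 ≤ t) : ∫ x in 0..L, ∂ₜ u x t = 0 := by
  have h1 := hu.contDiff.of_le one_le_two
  have hderiv : HasDerivAt (fun s => ∫ x in 0..L, u x s) (∫ x in 0..L, ∂ₜ u x t) t :=
    hasDerivAt_intervalIntegral_of_continuous h1.continuous (continuous_partialDeriv h1 (0, 1))
      (hasDerivAt_partialDeriv_snd (h1.differentiable one_ne_zero)) 0 L t
  -- a one-sided derivative, so that `t = 0` is covered
  have hzero : HasDerivWithinAt (fun s => ∫ x in 0..L, u x s) 0 (Ici t) t :=
    (hasDerivWithinAt_const t _ 0).congr (fun s hs => hu.integral_eq_zero s (ht.trans hs))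
      (hu.integral_eq_zero t ht)
  exact (uniqueDiffOn_Ici t t self_mem_Ici).eq_deriv _ hderiv.hasDerivWithinAt hzero

theorem hasDerivAt_energy_eq_zero (hu : IsProjectedSinhGordonSolution L u) {t : ℝ}
    (ht : 0 ≤ t) : HasDerivAt (energy L u) 0 t := by
  set m := 1 / L * ∫ y in 0..L, sinh (u y t)
  have hx := contDiff_partialDeriv hu.contDiff (m := 1) (by norm_num) (1, 0)
  have htt := contDiff_partialDeriv hu.contDiff (m := 1) (by norm_num) (0, 1)
  have hflux : ∀ x, ∂ₓ u x t * ∂ₜ (∂ₓ u) x t + ∂ₜ u x t * ∂ₜ (∂ₜ u) x t - sinh (u x t) * ∂ₜ u x t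
      = (∂ₓ (∂ₓ u) x t * ∂ₜ u x t + ∂ₓ u x t * ∂ₓ (∂ₜ u) x t) - m * ∂ₜ u x t := fun x => by
    rw [partialDeriv_comm hu.contDiff (0, 1) (1, 0)]
    linear_combination ∂ₜ u x t * hu.pde x t ht
  convert hasDerivAt_energy (L := L) hu.contDiff t using 1
  rw [intervalIntegral.integral_congr fun x _ => hflux x, intervalIntegral.integral_sub,
    intervalIntegral.integral_const_mul, integral_partialDeriv_fst_mul_add_eq_zero hx htt
      (partialDeriv_periodic hu.periodic _) (partialDeriv_periodic hu.periodic _),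
    hu.integral_partialDeriv_snd_eq_zero ht]
  · ring
  all_goals
    have := hx.continuous
    have := htt.continuous
    have := continuous_partialDeriv hx (1, 0)
    have := continuous_partialDeriv htt (1, 0)
    exact Continuous.intervalIntegrable (by fun_prop) _ _

theorem energy_eq (hu : IsProjectedSinhGordonSolution L u) {t : ℝ} (ht : 0 ≤ t) :
    energy L u t = energy L u 0 :=
  constant_of_has_deriv_right_zero
    (fun s _ => (hasDerivAt_energy hu.contDiff s).continuousAt.continuousWithinAt)
    (fun _ hs => (hu.hasDerivAt_energy_eq_zero hs.1).hasDerivWithinAt) t ⟨ht, le_rfl⟩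

theorem neg_four_mul_energy_le (hu : IsProjectedSinhGordonSolution L u) (hL : 0 ≤ L) {t : ℝ}
    (ht : 0 ≤ t) : -4 * energy L u t ≤ ∫ x in 0..L, 2 * (∂ₜ u x t ^ 2 + u x t * ∂ₜ (∂ₜ u) x t) := by
  set m := 1 / L * ∫ y in 0..L, sinh (u y t)
  have h1 := hu.contDiff.of_le one_le_two
  have hx := contDiff_partialDeriv hu.contDiff (m := 1) (by norm_num) (1, 0)
  have hvirial : ∀ x, 2 * (∂ₜ u x t ^ 2 + u x t * ∂ₜ (∂ₜ u) x t)
      = (4 * ∂ₜ u x t ^ 2 + 2 * (u x t * sinh (u x t) - 2 * (cosh (u x t) - 1)))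
        + 2 * (∂ₓ u x t * ∂ₓ u x t + u x t * ∂ₓ (∂ₓ u) x t) - 2 * m * u x t
        - 2 * (∂ₓ u x t ^ 2 + ∂ₜ u x t ^ 2 - 2 * (cosh (u x t) - 1)) := fun x => by
    linear_combination 2 * u x t * hu.pde x t ht
  have hnonneg : 0 ≤ ∫ x in 0..L,
      (4 * ∂ₜ u x t ^ 2 + 2 * (u x t * sinh (u x t) - 2 * (cosh (u x t) - 1))) :=
    intervalIntegral.integral_nonneg hL fun x _ => by
      nlinarith [two_mul_cosh_sub_one_le_mul_sinh (u x t), sq_nonneg (∂ₜ u x t)]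
  rw [intervalIntegral.integral_congr fun x _ => hvirial x, intervalIntegral.integral_sub,
    intervalIntegral.integral_sub, intervalIntegral.integral_add,
    intervalIntegral.integral_const_mul, intervalIntegral.integral_const_mul,
    intervalIntegral.integral_const_mul, integral_partialDeriv_fst_mul_add_eq_zero h1 hx
      hu.periodic (partialDeriv_periodic hu.periodic _), hu.integral_eq_zero t ht, energy]
  · linarith
  all_goals
    have := hu.contDiff.continuous
    have := hx.continuous
    have := continuous_partialDeriv h1 (0, 1)
    have := continuous_partialDeriv hx (1, 0)
    exact Continuous.intervalIntegrable (by fun_prop) _ _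

theorem tendsto_integral_sq_atTop (hu : IsProjectedSinhGordonSolution L u) (hL : 0 ≤ L)
    (hE : energy L u 0 < 0) : Tendsto (fun t => ∫ x in 0..L, u x t ^ 2) atTop atTop :=
  tendsto_atTop_of_le_deriv_deriv (c := -4 * energy L u 0) (by linarith)
    (hasDerivAt_integral_sq (hu.contDiff.of_le one_le_two))
    (hasDerivAt_integral_mul_partialDeriv_snd hu.contDiff)
    fun _ ht => hu.energy_eq ht ▸ hu.neg_four_mul_energy_le hL ht

end IsProjectedSinhGordonSolution

theorem sinhGordon_blowup
    (L : ℝ) (hL : 0 < L)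
    (u : ℝ → ℝ → ℝ)
    (hreg : ContDiff ℝ 2 (Function.uncurry u))
    (hper : ∀ x t : ℝ, u (x + L) t = u x t)
    (hmean : ∀ t : ℝ, 0 ≤ t → (∫ x in (0:ℝ)..L, u x t) = 0)
    (hpde : ∀ x t : ℝ, 0 ≤ t →
      deriv (deriv (fun s => u x s)) t
        - deriv (deriv (fun y => u y t)) x
        - Real.sinh (u x t)
        + (1 / L) * ∫ y in (0:ℝ)..L, Real.sinh (u y t) = 0)
    (hE0 : (1/2) * (∫ x in (0:ℝ)..L,
        ((deriv (fun y => u y 0) x)^2 + (deriv (fun s => u x s) 0)^2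
          - 2 * (Real.cosh (u x 0) - 1))) < 0) :
    ∀ C : ℝ, ∃ t : ℝ, 0 ≤ t ∧ C < ∫ x in (0:ℝ)..L, (u x t)^2 := by
  have hdiff := hreg.differentiable two_ne_zero
  have hdiffx := (contDiff_partialDeriv hreg (m := 1) (by norm_num) (1, 0)).differentiable
    one_ne_zero
  have hdifft := (contDiff_partialDeriv hreg (m := 1) (by norm_num) (0, 1)).differentiable
    one_ne_zero
  have hu : IsProjectedSinhGordonSolution L u :=
    { contDiff := hreg
      periodic := fun t x => hper x t
      integral_eq_zero := hmean
      pde := fun x t ht => by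
        simpa only [deriv_eq_partialDeriv_snd hdiff, deriv_eq_partialDeriv_snd hdifft,
          deriv_eq_partialDeriv_fst hdiff, deriv_eq_partialDeriv_fst hdiffx] using hpde x t ht }
  have hE : energy L u 0 < 0 := by
    simpa only [energy, deriv_eq_partialDeriv_snd hdiff, deriv_eq_partialDeriv_fst hdiff] using hE0
  intro C
  obtain ⟨t, hCt, ht⟩ :=
    ((hu.tendsto_integral_sq_atTop hL.le hE).eventually_gt_atTop C).and (eventually_ge_atTop 0)
      |>.exists
  exact ⟨t, ht, hCt⟩
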